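/- arXiv:2307.04017 — 3 statements merged into one kernel-verified Lean document; each statement's English description precedes it below -/
import Mathlib

section
/- Let Ω be a compact subset of ℝ^d, let 𝒳 = {X(1),…,X(k)} be a collection of finite-dimensional linear subspaces of the space C(Ω) of continuous functions on Ω, and let ξ = {ξ¹,…,ξ^m} ⊂ Ω be a set of m points providing L∞-universal discretization for 𝒳 with constant D ≥ 1, i.e. ‖f‖_∞ ≤ D·max_{1≤j≤m} |f(ξ^j)| for every f ∈ ⋃_{n=1}^k X(n). Then for any f ∈ C(Ω) the following holds: for each n ∈ {1,…,k} the minimum over u ∈ X(n) of max_{1≤j≤m} |f(ξ^j) − u(ξ^j)| is attained, and if for each n one picks any minimizer u_n ∈ X(n), then min_{1≤n≤k} ‖f − u_n‖_∞ ≤ (2D + 1)·min_{1≤n≤k} d(f, X(n))_∞. -/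
noncomputable section
open scoped BigOperators

/-- Uniform norm of a continuous complex-valued function. -/
def unifNormC {α : Type*} [TopologicalSpace α] (f : C(α, ℂ)) : ℝ :=
  ⨆ x : α, ‖f x‖

/-- Best uniform approximation `d(f, X)_∞` of `f` by elements of the subspace `X`. -/
def distToSub {α : Type*} [TopologicalSpace α] (f : C(α, ℂ)) (X : Submodule ℂ C(α, ℂ)) : ℝ :=
  ⨅ u : X, unifNormC (f - (u : C(α, ℂ)))

/-!
If `u ∈ X` minimises the discrete error `max_j |f(ξ^j) - u(ξ^j)|` and `v ∈ X` is arbitrary, then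
`‖f - u‖ ≤ ‖f - v‖ + ‖v - u‖`. Universal discretization bounds `‖v - u‖` by `D` times the discrete
norm of `v - u`, which by the triangle inequality and minimality of `u` is at most twice the discrete
error of `v`, hence at most `2‖f - v‖`. Discrete minimisers exist because the sampled image of `X` is
a subspace of the finite-dimensional space `ℓ∞^m`, hence closed.
-/

open scoped ENNReal

namespace ContinuousMap

variable {α ι 𝕜 E : Type*} [TopologicalSpace α] [Fintype ι] [NormedField 𝕜]
  [SeminormedAddCommGroup E] [NormedSpace 𝕜 E]

variable (𝕜) in
def sample (ξ : ι → α) : C(α, E) →ₗ[𝕜] PiLp ∞ (fun _ : ι => E) where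
  toFun g := WithLp.toLp ∞ fun j => g (ξ j)
  map_add' _ _ := rfl
  map_smul' _ _ := rfl

theorem norm_sample (ξ : ι → α) (g : C(α, E)) : ‖sample 𝕜 ξ g‖ = ⨆ j, ‖g (ξ j)‖ :=
  PiLp.norm_eq_ciSup _

theorem norm_sample_le [CompactSpace α] (ξ : ι → α) (g : C(α, E)) : ‖sample 𝕜 ξ g‖ ≤ ‖g‖ :=
  (norm_sample ξ g).trans_le <| Real.iSup_le (fun j => g.norm_coe_le_norm (ξ j)) (norm_nonneg g)

end ContinuousMap

theorem unifNormC_eq_norm {α : Type*} [TopologicalSpace α] [CompactSpace α] (f : C(α, ℂ)) :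
    unifNormC f = ‖f‖ :=
  (ContinuousMap.norm_eq_iSup_norm f).symm

theorem le_mul_distToSub {α : Type*} [TopologicalSpace α] [CompactSpace α]
    {X : Submodule ℂ C(α, ℂ)} {f u : C(α, ℂ)} {C : ℝ} (hC : 0 ≤ C)
    (h : ∀ v ∈ X, ‖f - u‖ ≤ C * ‖f - v‖) : ‖f - u‖ ≤ C * distToSub f X := by
  rw [distToSub, Real.mul_iInf_of_nonneg hC]
  exact le_ciInf fun v => (h v v.2).trans_eq (by rw [unifNormC_eq_norm])

theorem Real.iInf_le_mul_iInf {ι : Type*} [Finite ι] {a b : ι → ℝ} {c : ℝ} (hc : 0 ≤ c)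
    (h : ∀ i, a i ≤ c * b i) : ⨅ i, a i ≤ c * ⨅ i, b i := by
  cases isEmpty_or_nonempty ι
  · simp [Real.iInf_of_isEmpty]
  · rw [Real.mul_iInf_of_nonneg hc]
    exact ciInf_mono (Set.finite_range _).bddBelow h

theorem Submodule.exists_forall_norm_sub_le {𝕜 F : Type*} [NontriviallyNormedField 𝕜]
    [CompleteSpace 𝕜] [NormedAddCommGroup F] [NormedSpace 𝕜 F] [FiniteDimensional 𝕜 F]
    [ProperSpace F] (S : Submodule 𝕜 F) (y : F) : ∃ s ∈ S, ∀ t ∈ S, ‖y - s‖ ≤ ‖y - t‖ := by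
  obtain ⟨s, hs, hdist⟩ := S.closed_of_finiteDimensional.exists_infDist_eq_dist ⟨0, S.zero_mem⟩ y
  refine ⟨s, hs, fun t ht => ?_⟩
  rw [← dist_eq_norm, ← dist_eq_norm, ← hdist]
  exact Metric.infDist_le_dist_of_mem ht

theorem norm_sub_le_of_map_norm_sub_le {E F 𝓕 : Type*} [SeminormedAddCommGroup E]
    [SeminormedAddCommGroup F] [FunLike 𝓕 E F] [AddMonoidHomClass 𝓕 E F] (T : 𝓕)
    (hT : ∀ g, ‖T g‖ ≤ ‖g‖) {D : ℝ} (hD : 0 ≤ D) {f u v : E}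
    (hdisc : ‖v - u‖ ≤ D * ‖T (v - u)‖) (hmin : ‖T (f - u)‖ ≤ ‖T (f - v)‖) :
    ‖f - u‖ ≤ (2 * D + 1) * ‖f - v‖ := by
  have hTvu : ‖T (v - u)‖ ≤ 2 * ‖T (f - v)‖ := by
    calc ‖T (v - u)‖ = ‖T (f - u) - T (f - v)‖ := by rw [← map_sub]; congr 2; abel
      _ ≤ ‖T (f - u)‖ + ‖T (f - v)‖ := norm_sub_le _ _
      _ ≤ 2 * ‖T (f - v)‖ := by linarith
  calc ‖f - u‖ ≤ ‖f - v‖ + ‖v - u‖ := norm_sub_le_norm_sub_add_norm_sub f v u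
    _ ≤ ‖f - v‖ + D * (2 * ‖T (f - v)‖) := by gcongr; exact hdisc.trans (by gcongr)
    _ ≤ ‖f - v‖ + D * (2 * ‖f - v‖) := by gcongr; exact hT _
    _ = (2 * D + 1) * ‖f - v‖ := by ring

theorem stmt0_general {d k m : ℕ}
    (Ω : Set (Fin d → ℝ)) (hΩ : IsCompact Ω)
    (X : Fin k → Submodule ℂ C(Ω, ℂ))
    (ξ : Fin m → Ω) (D : ℝ) (hD : 1 ≤ D)
    (hud : ∀ n : Fin k, ∀ f ∈ X n,
      unifNormC f ≤ D * ⨆ j : Fin m, ‖f (ξ j)‖)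
    (f : C(Ω, ℂ)) :
    (∀ n : Fin k, ∃ u ∈ X n, ∀ v ∈ X n,
        (⨆ j : Fin m, ‖f (ξ j) - u (ξ j)‖) ≤
          ⨆ j : Fin m, ‖f (ξ j) - v (ξ j)‖) ∧
    (∀ u : Fin k → C(Ω, ℂ),
      (∀ n : Fin k, u n ∈ X n ∧ ∀ v ∈ X n,
        (⨆ j : Fin m, ‖f (ξ j) - (u n) (ξ j)‖) ≤
          ⨆ j : Fin m, ‖f (ξ j) - v (ξ j)‖) →
      (⨅ n : Fin k, unifNormC (f - u n)) ≤
        (2 * D + 1) * ⨅ n : Fin k, distToSub f (X n)) := by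
  have : CompactSpace Ω := isCompact_iff_compactSpace.mp hΩ
  let S := ContinuousMap.sample ℂ ξ (E := ℂ)
  have hS : ∀ g h : C(Ω, ℂ), (⨆ j, ‖g (ξ j) - h (ξ j)‖) = ‖S (g - h)‖ := fun g h =>
    (ContinuousMap.norm_sample ξ (g - h)).symm
  refine ⟨fun n => ?_, fun u hu => ?_⟩
  · obtain ⟨_, ⟨u, hu, rfl⟩, hmin⟩ := ((X n).map S).exists_forall_norm_sub_le (S f)
    refine ⟨u, hu, fun v hv => ?_⟩
    simpa only [hS, map_sub] using hmin (S v) ⟨v, hv, rfl⟩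
  refine Real.iInf_le_mul_iInf (by linarith) fun n => ?_
  obtain ⟨hun, hmin⟩ := hu n
  rw [unifNormC_eq_norm]
  refine le_mul_distToSub (by linarith) fun v hv => ?_
  refine norm_sub_le_of_map_norm_sub_le S (ContinuousMap.norm_sample_le ξ) (by linarith) ?_ ?_
  · simpa only [unifNormC_eq_norm, S, ContinuousMap.norm_sample] using hud n _ (sub_mem hv hun)
  · simpa only [hS] using hmin v hv

/-- Lebesgue-type inequality for the universal recovery algorithm
`ℓ∞(ξ, 𝒳)` under `L∞`-universal discretization. -/
theorem stmt0 {d k m : ℕ} (hk : 0 < k) (hm : 0 < m)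
    (Ω : Set (Fin d → ℝ)) (hΩne : Ω.Nonempty) (hΩ : IsCompact Ω)
    (X : Fin k → Submodule ℂ C(Ω, ℂ))
    (hXfd : ∀ n, FiniteDimensional ℂ (X n))
    (ξ : Fin m → Ω) (D : ℝ) (hD : 1 ≤ D)
    (hud : ∀ n : Fin k, ∀ f ∈ X n,
      unifNormC f ≤ D * ⨆ j : Fin m, ‖f (ξ j)‖)
    (f : C(Ω, ℂ)) :
    (∀ n : Fin k, ∃ u ∈ X n, ∀ v ∈ X n,
        (⨆ j : Fin m, ‖f (ξ j) - u (ξ j)‖) ≤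
          ⨆ j : Fin m, ‖f (ξ j) - v (ξ j)‖) ∧
    (∀ u : Fin k → C(Ω, ℂ),
      (∀ n : Fin k, u n ∈ X n ∧ ∀ v ∈ X n,
        (⨆ j : Fin m, ‖f (ξ j) - (u n) (ξ j)‖) ≤
          ⨆ j : Fin m, ‖f (ξ j) - v (ξ j)‖) →
      (⨅ n : Fin k, unifNormC (f - u n)) ≤
        (2 * D + 1) * ⨅ n : Fin k, distToSub f (X n)) :=
  stmt0_general Ω hΩ X ξ D hD hud f
end
end

section
/- There exists an absolute constant γ > 0 such that for any n > 2 and any N ∈ ℕ with N ≤ γ·b_n, every trigonometric polynomial f ∈ 𝒯(Γ(N,2)) satisfies b_n^{−1} Σ_{ν=1}^{b_n} f(2πν/b_n, 2π{ν b_{n−1}/b_n}) = (2π)^{−2} ∫_{𝕋²} f(x) dx. -/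
/-!
Both sides are linear in `f`, so it suffices to treat `f = e^{i(k,x)}` with `k ∈ Γ(N,2)`. The
integral is `(2π)²` for `k = 0` and vanishes otherwise. The Fibonacci sum is a geometric sum of
`b_n`-th roots of unity, equal to `b_n` if `b_n ∣ k₁ + k₂ b_{n-1}` and to `0` otherwise.
Writing `b_n = F(n+1)` with `F = Nat.fib`, the solutions of this congruence form a lattice with
the bases `((-1)^j F(n+1-j), F j)`, `(-(-1)^j F(n-j), F(j+1))`, `0 ≤ j ≤ n`. Expanding a nonzero
solution in the basis with `F j ≤ |k₂| < F(j+1)` gives `|k₁| ≥ F(n+1-j)`, hence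
`b_n ≤ 3 max(|k₁|,1) max(|k₂|,1)`, so for `4N ≤ b_n` only `k = 0` survives in `Γ(N,2)`.
-/

noncomputable section
open scoped BigOperators
open MeasureTheory

/-- The cube `[0, 2π]^d`, representing the torus `𝕋^d`. -/
def cube (d : ℕ) : Set (Fin d → ℝ) := Set.Icc 0 (fun _ => 2 * Real.pi)

/-- Uniform norm over the torus `𝕋^d = [0, 2π]^d`. -/
def unifNorm {d : ℕ} (f : (Fin d → ℝ) → ℂ) : ℝ :=
  ⨆ x : cube d, ‖f ↑x‖

/-- The exponential `e^{i(k,x)}`. -/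
def expFun {d : ℕ} (k : Fin d → ℤ) : (Fin d → ℝ) → ℂ :=
  fun x => Complex.exp (Complex.I * ∑ j, (k j : ℂ) * (x j : ℂ))

/-- `𝒯(Q)`: the space of trigonometric polynomials with frequencies in `Q`. -/
def trigSpace {d : ℕ} (Q : Finset (Fin d → ℤ)) : Submodule ℂ ((Fin d → ℝ) → ℂ) :=
  Submodule.span ℂ (expFun '' (Q : Set (Fin d → ℤ)))

/-- `R(s) = {k : |k_j| < 2^{s_j}}`. -/
def Rbox {d : ℕ} (s : Fin d → ℕ) : Finset (Fin d → ℤ) :=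
  Fintype.piFinset fun j => Finset.Ioo (-(2 ^ (s j) : ℤ)) ((2 : ℤ) ^ (s j))

/-- Best uniform approximation `d(f, 𝒯(Q))_∞`. -/
def distT {d : ℕ} (f : (Fin d → ℝ) → ℂ) (Q : Finset (Fin d → ℤ)) : ℝ :=
  ⨅ u : trigSpace Q, unifNorm (f - (u : (Fin d → ℝ) → ℂ))

/-- `2π`-periodicity in each variable. -/
def Periodic2Pi {d : ℕ} (f : (Fin d → ℝ) → ℂ) : Prop :=
  ∀ (x : Fin d → ℝ) (j : Fin d), f (x + (2 * Real.pi) • (Pi.single j 1 : Fin d → ℝ)) = f x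

/-- The Fibonacci numbers `b_0 = b_1 = 1`, `b_n = b_{n-1} + b_{n-2}`. -/
def fibb : ℕ → ℕ
  | 0 => 1
  | 1 => 1
  | n + 2 => fibb (n + 1) + fibb n

/-- The hyperbolic cross `Γ(N, d)`. -/
def hyperCross (d N : ℕ) : Finset (Fin d → ℤ) :=
  (Fintype.piFinset fun _ : Fin d => Finset.Icc (-(N : ℤ)) (N : ℤ)).filter
    fun k => (∏ j, max |k j| 1) ≤ (N : ℤ)

/-- The Fibonacci points `y^ν = (2πν/b_n, 2π{ν b_{n-1}/b_n})`. -/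
def fibPoint (n ν : ℕ) : Fin 2 → ℝ :=
  ![2 * Real.pi * ν / fibb n, 2 * Real.pi * Int.fract ((↑(ν * fibb (n - 1)) : ℝ) / fibb n)]

namespace Nat

/-- d'Ocagne's identity, read off from `Int.fib_add` at a negative index. -/
theorem fib_succ_dvd_fib_mul_fib_add_neg_one_pow_mul_fib {a b c : ℕ} (h : a + b = c + 1) :
    (fib (c + 1) : ℤ) ∣ fib a * fib c + (-1) ^ a * fib b := by
  have hadd := Int.fib_add (c + 1 : ℕ) (-a)
  rw [Int.fib_neg_natCast, show ((c + 1 : ℕ) : ℤ) + -a = (b : ℕ) by omega,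
    show ((c + 1 : ℕ) : ℤ) - 1 = (c : ℕ) by omega, pow_succ] at hadd
  simp only [Int.fib_natCast] at hadd
  refine ⟨(-1) ^ a * Int.fib (-a + 1), ?_⟩
  obtain ⟨s, hs_def, hs⟩ : ∃ s : ℤ, (-1) ^ a = s ∧ s * s = 1 :=
    ⟨_, rfl, by rw [← pow_add]; simp⟩
  rw [hs_def] at hadd ⊢
  linear_combination s * hadd - (fib a * fib c) * hs

/-- Cramer's rule in the basis `((-1)^j F(r+1), F j)`, `(-(-1)^j F r, F(j+1))` of the lattice
`{(x, y) | F(j+r+1) ∣ x + y F(j+r)}`, whose determinant is `(-1)^j F(j+r+1)`. -/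
theorem exists_fib_coeffs_of_dvd (j r : ℕ) {x y : ℤ}
    (h : (fib (j + r + 1) : ℤ) ∣ x + y * fib (j + r)) :
    ∃ α β : ℤ, y = α * fib j + β * fib (j + 1) ∧
      (-1) ^ j * x = α * fib (r + 1) - β * fib r := by
  have hF : (fib (j + r + 1) : ℤ) ≠ 0 := by exact_mod_cast (fib_pos.2 (succ_pos _)).ne'
  have hfib : (fib (j + r + 1) : ℤ) = fib j * fib r + fib (j + 1) * fib (r + 1) := by
    exact_mod_cast fib_add j r
  have hα := (h.mul_left ((-1) ^ j * fib (j + 1))).sub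
    ((fib_succ_dvd_fib_mul_fib_add_neg_one_pow_mul_fib (a := j + 1) (b := r)
      (by ring)).mul_left ((-1) ^ j * y))
  have hβ := (h.mul_left ((-1) ^ j * fib j)).sub
    ((fib_succ_dvd_fib_mul_fib_add_neg_one_pow_mul_fib (a := j) (b := r + 1)
      (by ring)).mul_left ((-1) ^ j * y))
  rw [pow_succ] at hα
  obtain ⟨s, hs_def, hs⟩ : ∃ s : ℤ, (-1) ^ j = s ∧ s * s = 1 :=
    ⟨_, rfl, by rw [← pow_add]; simp⟩
  rw [hs_def] at hα hβ ⊢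
  obtain ⟨α, hα⟩ := hα
  obtain ⟨β, hβ⟩ := hβ
  refine ⟨α, -β, mul_left_cancel₀ hF ?_, mul_left_cancel₀ hF ?_⟩
  · linear_combination (fib j : ℤ) * hα - fib (j + 1) * hβ + y * hfib
      - y * (fib j * fib r + fib (j + 1) * fib (r + 1)) * hs
  · linear_combination (fib (r + 1) : ℤ) * hα + fib r * hβ + s * x * hfib

theorem fib_succ_le_abs_of_dvd (j r : ℕ) {x y : ℤ} (hxy : x ≠ 0 ∨ y ≠ 0)
    (h : (fib (j + r + 1) : ℤ) ∣ x + y * fib (j + r)) (hy : |y| < fib (j + 1)) :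
    (fib (r + 1) : ℤ) ≤ |x| := by
  obtain ⟨α, β, hy_eq, hx_eq⟩ := exists_fib_coeffs_of_dvd j r h
  -- If `α` and `β` had the same sign, `|y|` would reach `F(j+1)`; otherwise the two terms of
  -- `(-1)^j x = α F(r+1) - β F r` reinforce each other.
  have hx_abs : |x| = |α * fib (r + 1) - β * fib r| := by
    rw [← hx_eq, abs_mul, abs_pow, abs_neg, abs_one, one_pow, one_mul]
  have hj : (0 : ℤ) ≤ fib j := by positivity
  have hj1 : (0 : ℤ) < fib (j + 1) := by exact_mod_cast fib_pos.2 (succ_pos j)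
  have hr : (0 : ℤ) ≤ fib r := by positivity
  have hr1 : (0 : ℤ) < fib (r + 1) := by exact_mod_cast fib_pos.2 (succ_pos r)
  rw [hx_abs]
  obtain hα | rfl | hα := lt_trichotomy α 0
  · rcases lt_or_ge β 0 with hβ | hβ
    · rw [abs_lt] at hy; nlinarith
    · rw [abs_of_neg (by nlinarith)]; nlinarith
  · rcases eq_or_ne β 0 with rfl | hβ
    · rcases hxy with hx | hy0
      · exact absurd (by simpa using hx_eq) hx
      · exact absurd (by simpa using hy_eq) hy0
    · rw [hy_eq, zero_mul, zero_add, abs_mul, abs_of_pos hj1] at hy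
      nlinarith [Int.one_le_abs hβ]
  · rcases le_or_gt β 0 with hβ | hβ
    · rw [abs_of_pos (by nlinarith)]; nlinarith
    · rw [abs_lt] at hy; nlinarith

theorem fib_add_add_one_le_three_mul {j : ℕ} (hj : j ≠ 0) (r : ℕ) :
    fib (j + r + 1) ≤ 3 * (fib j * fib (r + 1)) := by
  obtain ⟨i, rfl⟩ := exists_eq_add_one_of_ne_zero hj
  have hi : fib (i + 2) ≤ 2 * fib (i + 1) := by
    rw [fib_add_two, two_mul]
    exact Nat.add_le_add_right fib_le_fib_succ _
  have hr : fib r ≤ fib (r + 1) := fib_le_fib_succ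
  rw [fib_add]
  nlinarith

theorem fib_succ_le_three_mul_of_dvd (m : ℕ) {x y : ℤ} (hxy : x ≠ 0 ∨ y ≠ 0)
    (h : (fib (m + 1) : ℤ) ∣ x + y * fib m) :
    (fib (m + 1) : ℤ) ≤ 3 * (max |x| 1 * max |y| 1) := by
  have hx1 : |x| ≤ max |x| 1 := le_max_left _ _
  have hy1 : |y| ≤ max |y| 1 := le_max_left _ _
  have hX : 1 ≤ max |x| 1 := le_max_right _ _
  have hY : 1 ≤ max |y| 1 := le_max_right _ _
  rcases eq_or_ne y 0 with rfl | hy0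
  · have hx0 := hxy.resolve_right (not_not.2 rfl)
    rw [zero_mul, add_zero] at h
    have := Int.le_of_dvd (abs_pos.2 hx0) ((dvd_abs _ _).2 h)
    nlinarith
  rcases le_or_gt (fib (m + 1) : ℤ) |y| with hyF | hyF
  · nlinarith
  have hex : ∃ j, |y| < fib (j + 1) := ⟨m, hyF⟩
  obtain ⟨j, hj, hmin⟩ : ∃ j, |y| < fib (j + 1) ∧ ∀ i < j, (fib (i + 1) : ℤ) ≤ |y| :=
    ⟨Nat.find hex, Nat.find_spec hex, fun i hi => not_lt.1 (Nat.find_min hex hi)⟩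
  obtain ⟨i, rfl⟩ : ∃ i, j = i + 1 := by
    refine Nat.exists_eq_add_one.2 (Nat.pos_of_ne_zero ?_)
    rintro rfl
    simp only [zero_add, fib_one, Nat.cast_one] at hj
    exact hy0 (Int.abs_lt_one_iff.1 hj)
  obtain ⟨r, rfl⟩ : ∃ r, m = i + 1 + r :=
    Nat.exists_eq_add_of_le (not_lt.1 fun hm => (hmin m hm).not_gt hyF)
  have hxF := fib_succ_le_abs_of_dvd (i + 1) r hxy h hj
  have hyF' := hmin i (lt_add_one i)
  calc (fib (i + 1 + r + 1) : ℤ) ≤ 3 * (fib (i + 1) * fib (r + 1)) := by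
        exact_mod_cast fib_add_add_one_le_three_mul (i.succ_ne_zero) r
    _ ≤ 3 * (max |x| 1 * max |y| 1) := by rw [mul_comm (fib (i + 1) : ℤ)]; gcongr <;> omega

end Nat

theorem fibb_eq_fib (n : ℕ) : fibb n = Nat.fib (n + 1) := by
  induction n using Nat.twoStepInduction with
  | zero => rfl
  | one => rfl
  | more n ih₁ ih₂ => rw [fibb, ih₁, ih₂, Nat.fib_add_two (n := n + 1), add_comm]

theorem fibb_pos (n : ℕ) : 0 < fibb n := by
  rw [fibb_eq_fib]; exact Nat.fib_pos.2 n.succ_pos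

theorem eq_zero_of_mem_hyperCross_of_dvd {n N : ℕ} (hn : 1 ≤ n) (hN : 3 * N < fibb n)
    {k : Fin 2 → ℤ} (hk : k ∈ hyperCross 2 N)
    (hdvd : (fibb n : ℤ) ∣ k 0 + k 1 * fibb (n - 1)) : k = 0 := by
  obtain ⟨m, rfl⟩ := Nat.exists_eq_add_of_le' hn
  rw [fibb_eq_fib] at hN hdvd
  rw [Nat.add_sub_cancel, fibb_eq_fib] at hdvd
  have hprod : max |k 0| 1 * max |k 1| 1 ≤ N := by
    simp only [hyperCross, Finset.mem_filter, Fin.prod_univ_two] at hk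
    exact hk.2
  by_contra hk0
  have hk01 : k 0 ≠ 0 ∨ k 1 ≠ 0 := by
    by_contra! h
    exact hk0 (funext fun i => by fin_cases i <;> simp [h.1, h.2])
  have := Nat.fib_succ_le_three_mul_of_dvd (m + 1) hk01 hdvd
  omega

theorem sum_Icc_pow_eq_ite {K : Type*} [Field K] [DecidableEq K] {ω : K} {b : ℕ}
    (hω : ω ^ b = 1) : ∑ ν ∈ Finset.Icc 1 b, ω ^ ν = if ω = 1 then (b : K) else 0 := by
  split_ifs with h1
  · simp [h1]
  · rw [← Finset.Ico_add_one_right_eq_Icc, Finset.sum_Ico_eq_sum_range, Nat.add_sub_cancel]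
    simp_rw [pow_add, pow_one, ← Finset.mul_sum, geom_sum_eq h1, hω, sub_self, zero_div, mul_zero]

theorem expFun_fibPoint (n ν : ℕ) (k : Fin 2 → ℤ) :
    expFun k (fibPoint n ν) =
      (Complex.exp (2 * Real.pi * Complex.I / fibb n) ^ (k 0 + k 1 * fibb (n - 1))) ^ ν := by
  have hb : (fibb n : ℂ) ≠ 0 := Nat.cast_ne_zero.2 (fibb_pos n).ne'
  rw [← Complex.exp_int_mul, ← Complex.exp_nat_mul, expFun, Complex.exp_eq_exp_iff_exists_int]
  -- `Int.fract` shifts the second coordinate by a multiple of `2π`, which `expFun k` cannot see.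
  refine ⟨-(k 1 * ⌊((ν * fibb (n - 1) : ℕ) : ℝ) / fibb n⌋), ?_⟩
  simp only [fibPoint, Fin.sum_univ_two, Matrix.cons_val_zero, Matrix.cons_val_one,
    Int.fract]
  push_cast
  field_simp
  ring

theorem sum_expFun_fibPoint (n : ℕ) (k : Fin 2 → ℤ) :
    ∑ ν ∈ Finset.Icc 1 (fibb n), expFun k (fibPoint n ν) =
      if (fibb n : ℤ) ∣ k 0 + k 1 * fibb (n - 1) then (fibb n : ℂ) else 0 := by
  have hζ := Complex.isPrimitiveRoot_exp (fibb n) (fibb_pos n).ne'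
  have hpow : (Complex.exp (2 * Real.pi * Complex.I / fibb n) ^ (k 0 + k 1 * fibb (n - 1)))
      ^ fibb n = 1 := by
    rw [← zpow_natCast, ← zpow_mul, mul_comm _ (fibb n : ℤ), zpow_mul, zpow_natCast,
      hζ.pow_eq_one, one_zpow]
  simp only [expFun_fibPoint, sum_Icc_pow_eq_ite hpow, hζ.zpow_eq_one_iff_dvd]

theorem continuous_expFun {d : ℕ} (k : Fin d → ℤ) : Continuous (expFun k) := by
  unfold expFun
  fun_prop

theorem integral_exp_int_mul_Icc (j : ℤ) :
    ∫ t in Set.Icc 0 (2 * Real.pi), Complex.exp (Complex.I * (j * t)) =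
      if j = 0 then ((2 * Real.pi : ℝ) : ℂ) else 0 := by
  rw [integral_Icc_eq_integral_Ioc, ← intervalIntegral.integral_of_le Real.two_pi_pos.le]
  split_ifs with hj
  · simp [hj]
  · have hc : Complex.I * j ≠ 0 := mul_ne_zero Complex.I_ne_zero (Int.cast_ne_zero.2 hj)
    simp_rw [← mul_assoc]
    rw [integral_exp_mul_complex hc, Complex.ofReal_zero, mul_zero, Complex.exp_zero,
      show Complex.I * j * ((2 * Real.pi : ℝ) : ℂ) = j * (2 * Real.pi * Complex.I) by
        push_cast; ring, Complex.exp_int_mul_two_pi_mul_I, sub_self, zero_div]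

theorem integral_expFun_cube {d : ℕ} (k : Fin d → ℤ) :
    ∫ x in cube d, expFun k x = if k = 0 then (((2 * Real.pi) ^ d : ℝ) : ℂ) else 0 := by
  simp_rw [cube, ← Set.pi_univ_Icc, MeasureTheory.volume_pi, Measure.restrict_pi_pi, expFun,
    Finset.mul_sum, Complex.exp_sum]
  rw [integral_fintype_prod_eq_prod (fun j (t : ℝ) => Complex.exp (Complex.I * (k j * t)))]
  simp only [Pi.zero_apply, integral_exp_int_mul_Icc, Finset.prod_ite_zero, Finset.prod_const,
    Finset.card_univ, Fintype.card_fin, Finset.mem_univ, true_imp_iff, funext_iff,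
    Complex.ofReal_pow]

theorem continuous_of_mem_trigSpace {d : ℕ} {Q : Finset (Fin d → ℤ)} {f : (Fin d → ℝ) → ℂ}
    (hf : f ∈ trigSpace Q) : Continuous f := by
  induction hf using Submodule.span_induction with
  | mem g hg => obtain ⟨k, -, rfl⟩ := hg; exact continuous_expFun k
  | zero => exact continuous_zero
  | add g₁ g₂ _ _ h₁ h₂ => exact h₁.add h₂
  | smul a g _ h => exact h.const_smul a

theorem integrableOn_cube_of_mem_trigSpace {d : ℕ} {Q : Finset (Fin d → ℤ)}
    {f : (Fin d → ℝ) → ℂ} (hf : f ∈ trigSpace Q) : IntegrableOn f (cube d) :=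
  (continuous_of_mem_trigSpace hf).integrableOn_Icc

theorem sum_eq_integral_of_mem_trigSpace {d : ℕ} {Q : Finset (Fin d → ℤ)} {ι : Type*}
    (s : Finset ι) (y : ι → Fin d → ℝ) (a c : ℂ)
    (h : ∀ k ∈ Q, a * ∑ i ∈ s, expFun k (y i) = c * ∫ x in cube d, expFun k x)
    {f : (Fin d → ℝ) → ℂ} (hf : f ∈ trigSpace Q) :
    a * ∑ i ∈ s, f (y i) = c * ∫ x in cube d, f x := by
  induction hf using Submodule.span_induction with
  | mem g hg => obtain ⟨k, hk, rfl⟩ := hg; exact h k hk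
  | zero => simp
  | add g₁ g₂ hg₁ hg₂ h₁ h₂ =>
    simp only [Pi.add_apply, Finset.sum_add_distrib,
      integral_add (integrableOn_cube_of_mem_trigSpace hg₁)
        (integrableOn_cube_of_mem_trigSpace hg₂)]
    linear_combination h₁ + h₂
  | smul b g _ h =>
    simp only [Pi.smul_apply, smul_eq_mul, ← Finset.mul_sum, integral_const_mul]
    linear_combination b * h

/-- the Fibonacci cubature formula is exact on the hyperbolic cross
`𝒯(Γ(N,2))` for `N ≤ γ·b_n` (Lemma AL1). -/
theorem stmt7 :
    ∃ γ : ℝ, 0 < γ ∧ ∀ n : ℕ, 2 < n → ∀ N : ℕ, (N : ℝ) ≤ γ * fibb n →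
      ∀ f ∈ trigSpace (hyperCross 2 N),
        (fibb n : ℂ)⁻¹ * ∑ ν ∈ Finset.Icc 1 (fibb n), f (fibPoint n ν) =
          (((2 * Real.pi) ^ 2 : ℝ) : ℂ)⁻¹ * ∫ x in cube 2, f x := by
  refine ⟨1 / 4, by norm_num, fun n hn N hN f hf => ?_⟩
  have hN3 : 3 * N < fibb n := by
    have hb : (0 : ℝ) < fibb n := Nat.cast_pos.2 (fibb_pos n)
    exact_mod_cast (show (3 * N : ℝ) < fibb n by linarith)
  refine sum_eq_integral_of_mem_trigSpace _ _ _ _ (fun k hk => ?_) hf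
  rw [sum_expFun_fibPoint, integral_expFun_cube]
  by_cases hk0 : k = 0
  · have hb : (fibb n : ℂ) ≠ 0 := Nat.cast_ne_zero.2 (fibb_pos n).ne'
    simp [hk0, hb]
  · rw [if_neg hk0, if_neg fun h => hk0 (eq_zero_of_mem_hyperCross_of_dvd (by omega) hN3 hk h),
      mul_zero, mul_zero]
end
end

section
/- Let m ∈ ℕ, h = (h_1,…,h_d) ∈ ℤ^d, and suppose the Korobov cubature formula P_m(f,h) := m^{−1} Σ_{ν=1}^m f(w^ν), with nodes w^ν := (2π{νh_1/m}, …, 2π{νh_d/m}), is exact on 𝒯(Γ(N,d)). Let ℓ ∈ ℕ be the largest natural number satisfying 2^ℓ ≤ 3^{−d}·N. Then for any s with ‖s‖₁ ≤ ℓ and any complex numbers a_1,…,a_m: ‖m^{−1} Σ_{ν=1}^m a_ν |𝒱_{2^s}(· − w^ν)|‖_∞ ≤ 3^d·max_{1≤ν≤m} |a_ν|. -/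
/-!
Writing `F_n` for the (nonnegative) Fejér kernel, the de la Vallée Poussin kernel is
`𝒱_j = 2 F_{2j} - F_j`, so `|𝒱_{2^s}(x - w)|` is dominated by
`G_x(w) = ∏ᵢ (2 F_{2^{s_i+1}} + F_{2^{s_i}})(x_i - w_i)`. The function `G_x` is a trigonometric
polynomial with frequencies in the box `|k_i| < 2^{s_i+1}`, which lies in `Γ(N, d)` because
`2^{‖s‖₁ + d} ≤ 3^d 2^ℓ ≤ N`, and its mean over the torus is `3^d`. Exactness of the cubature
formula therefore gives `m⁻¹ ∑_ν G_x(w^ν) = 3^d`, and the bound follows term by term.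
-/

noncomputable section
open scoped BigOperators
open MeasureTheory

/-- The Dirichlet kernel `𝒟_l`. -/
def dirichletK (l : ℕ) (x : ℝ) : ℂ :=
  ∑ k ∈ Finset.Icc (-(l : ℤ)) (l : ℤ), Complex.exp (Complex.I * (k : ℂ) * (x : ℂ))

/-- The de la Vallée Poussin kernel `𝒱_j`. -/
def vpK (j : ℕ) (x : ℝ) : ℂ := (j : ℂ)⁻¹ * ∑ l ∈ Finset.Ico j (2 * j), dirichletK l x

/-- The multivariate de la Vallée Poussin kernel `𝒱_{(j_1,…,j_d)}`. -/
def vpKd {d : ℕ} (j : Fin d → ℕ) (x : Fin d → ℝ) : ℂ := ∏ i, vpK (j i) (x i)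

/-- The Korobov points `w^ν = (2π{νh_1/m}, …, 2π{νh_d/m})`. -/
def korNode (m : ℕ) {d : ℕ} (h : Fin d → ℤ) (ν : ℕ) : Fin d → ℝ :=
  fun i => 2 * Real.pi * Int.fract ((ν : ℝ) * (h i : ℝ) / (m : ℝ))

open Finset Real

def expI (k : ℤ) (y : ℝ) : ℂ := Complex.exp (Complex.I * k * y)

lemma expI_zero_left (y : ℝ) : expI 0 y = 1 := by simp [expI]

lemma conj_expI_mul_expI (k k' : ℤ) (y : ℝ) :
    starRingEnd ℂ (expI k y) * expI k' y = expI (k' - k) y := by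
  rw [expI, expI, expI, ← Complex.exp_conj, ← Complex.exp_add]
  simp only [map_mul, Complex.conj_I, map_intCast, Complex.conj_ofReal]
  push_cast
  ring_nf

lemma expI_sub_right (k : ℤ) (x t : ℝ) : expI k (x - t) = expI k x * expI (-k) t := by
  rw [expI, expI, expI, ← Complex.exp_add]
  push_cast
  ring_nf

lemma prod_expI_eq_expFun {d : ℕ} (k : Fin d → ℤ) (w : Fin d → ℝ) :
    ∏ i, expI (k i) (w i) = expFun k w := by
  simp only [expI, expFun, ← Complex.exp_sum, mul_sum, mul_assoc]

lemma continuous_expI (k : ℤ) : Continuous (expI k) := by unfold expI; fun_prop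

lemma setIntegral_expI (k : ℤ) :
    ∫ t in Set.Icc 0 (2 * π), expI k t = if k = 0 then ((2 * π : ℝ) : ℂ) else 0 := by
  rcases eq_or_ne k 0 with rfl | hk
  · simp [expI_zero_left, Real.pi_nonneg]
  have hc : Complex.I * k ≠ 0 := mul_ne_zero Complex.I_ne_zero (Int.cast_ne_zero.mpr hk)
  have hperiod : Complex.exp (Complex.I * k * (2 * π : ℝ)) = 1 := by
    rw [show Complex.I * k * ((2 * π : ℝ) : ℂ) = k * (2 * π * Complex.I) by push_cast; ring]
    exact Complex.exp_int_mul_two_pi_mul_I k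
  rw [if_neg hk, integral_Icc_eq_integral_Ioc, ← intervalIntegral.integral_of_le (by positivity)]
  simp only [expI]
  rw [integral_exp_mul_complex hc, hperiod]
  simp

-- The Fejér kernel with `n` terms, classically `K_{n-1}`.
def fejerK (n : ℕ) (y : ℝ) : ℝ := (n : ℝ)⁻¹ * Complex.normSq (∑ j ∈ range n, expI j y)

lemma fejerK_nonneg (n : ℕ) (y : ℝ) : 0 ≤ fejerK n y :=
  mul_nonneg (by positivity) (Complex.normSq_nonneg _)

lemma fejerK_eq_sum (n : ℕ) (y : ℝ) :
    (fejerK n y : ℂ) = (n : ℂ)⁻¹ * ∑ j ∈ range n, ∑ j' ∈ range n, expI ((j : ℤ) - j') y := by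
  rw [fejerK, Complex.ofReal_mul, Complex.normSq_eq_conj_mul_self, map_sum, sum_mul_sum, sum_comm]
  simp only [conj_expI_mul_expI]
  push_cast
  rfl

lemma dirichletK_eq_sum_range (n : ℕ) (y : ℝ) :
    dirichletK n y = ∑ i ∈ range (n + 1), expI ((i : ℤ) - n) y
      + ∑ i ∈ range n, expI ((i : ℤ) + 1) y := by
  rw [dirichletK, Int.Icc_eq_finset_map, sum_map,
    show (n + 1 - -(n : ℤ)).toNat = (n + 1) + n by omega, sum_range_add]
  congr 1 <;> refine sum_congr rfl fun i _ => ?_ <;>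
    simp only [expI, Function.Embedding.trans_apply, Nat.castEmbedding_apply,
      addLeftEmbedding_apply] <;> push_cast <;> ring_nf

lemma sum_range_dirichletK (n : ℕ) (y : ℝ) :
    ∑ l ∈ range n, dirichletK l y = ∑ j ∈ range n, ∑ j' ∈ range n, expI ((j : ℤ) - j') y := by
  induction n with
  | zero => simp
  | succ n ih =>
    have hreflect : ∑ i ∈ range n, expI ((i : ℤ) + 1) y = ∑ j ∈ range n, expI ((n : ℤ) - j) y := by
      rw [← sum_range_reflect]
      refine sum_congr rfl fun j hj => ?_
      rw [mem_range] at hj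
      congr 1
      omega
    rw [sum_range_succ, ih, dirichletK_eq_sum_range, hreflect]
    simp only [sum_range_succ, sum_add_distrib]
    ring

lemma sum_range_dirichletK_eq_fejerK (n : ℕ) (y : ℝ) :
    ∑ l ∈ range n, dirichletK l y = n * fejerK n y := by
  rcases Nat.eq_zero_or_pos n with rfl | hn
  · simp
  rw [sum_range_dirichletK, fejerK_eq_sum, ← mul_assoc, mul_inv_cancel₀ (by exact_mod_cast hn.ne'),
    one_mul]

lemma vpK_eq_fejerK (j : ℕ) (x : ℝ) : vpK j x = 2 * fejerK (2 * j) x - fejerK j x := by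
  rcases Nat.eq_zero_or_pos j with rfl | hj
  · simp [vpK, fejerK]
  have hj' : (j : ℂ) ≠ 0 := by exact_mod_cast hj.ne'
  rw [vpK, sum_Ico_eq_sub _ (by omega : j ≤ 2 * j), sum_range_dirichletK_eq_fejerK,
    sum_range_dirichletK_eq_fejerK]
  push_cast
  field_simp

def vpKMajorant (j : ℕ) (y : ℝ) : ℝ := 2 * fejerK (2 * j) y + fejerK j y

lemma norm_vpK_le (j : ℕ) (y : ℝ) : ‖vpK j y‖ ≤ vpKMajorant j y := by
  rw [vpK_eq_fejerK, ← Complex.ofReal_ofNat, ← Complex.ofReal_mul, ← Complex.ofReal_sub,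
    Complex.norm_real, Real.norm_eq_abs, abs_le, vpKMajorant]
  constructor <;> linarith [fejerK_nonneg (2 * j) y, fejerK_nonneg j y]

lemma fejerK_sub_eq_sum (n : ℕ) (x t : ℝ) :
    (fejerK n (x - t) : ℂ) = ∑ j ∈ range n, ∑ j' ∈ range n,
      (n : ℂ)⁻¹ * expI ((j : ℤ) - j') x * expI ((j' : ℤ) - j) t := by
  simp only [fejerK_eq_sum, expI_sub_right, mul_sum, neg_sub, mul_assoc]

def trigPoly1 (M : ℕ) : Submodule ℂ (ℝ → ℂ) :=
  Submodule.span ℂ (expI '' Set.Ioo (-(M : ℤ)) M)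

lemma trigPoly1_mono {M M' : ℕ} (h : M ≤ M') : trigPoly1 M ≤ trigPoly1 M' :=
  Submodule.span_mono <| Set.image_mono <| Set.Ioo_subset_Ioo (by omega) (by omega)

lemma fejerK_sub_mem_trigPoly1 (n : ℕ) (x : ℝ) :
    (fun t => (fejerK n (x - t) : ℂ)) ∈ trigPoly1 n := by
  have hexpand : (fun t => (fejerK n (x - t) : ℂ)) = ∑ j ∈ range n, ∑ j' ∈ range n,
      ((n : ℂ)⁻¹ * expI ((j : ℤ) - j') x) • expI ((j' : ℤ) - j) := by
    ext t
    simp only [fejerK_sub_eq_sum, Finset.sum_apply, Pi.smul_apply, smul_eq_mul]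
  rw [hexpand]
  refine Submodule.sum_mem _ fun j hj => Submodule.sum_mem _ fun j' hj' =>
    Submodule.smul_mem _ _ (Submodule.subset_span ⟨_, ?_, rfl⟩)
  rw [mem_range] at hj hj'
  constructor <;> omega

lemma vpKMajorant_sub_mem_trigPoly1 (j : ℕ) (x : ℝ) :
    (fun t => (vpKMajorant j (x - t) : ℂ)) ∈ trigPoly1 (2 * j) := by
  have h := add_mem (Submodule.smul_mem _ (2 : ℂ) (fejerK_sub_mem_trigPoly1 (2 * j) x))
    (trigPoly1_mono (show j ≤ 2 * j by omega) (fejerK_sub_mem_trigPoly1 j x))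
  convert h using 1
  ext t
  simp [vpKMajorant]

lemma prod_mem_trigSpace {d : ℕ} {M : Fin d → ℕ} {f : Fin d → ℝ → ℂ}
    (hf : ∀ i, f i ∈ trigPoly1 (M i)) {Q : Finset (Fin d → ℤ)}
    (hQ : ∀ k : Fin d → ℤ, (∀ i, |k i| < M i) → k ∈ Q) :
    (fun w : Fin d → ℝ => ∏ i, f i (w i)) ∈ trigSpace Q := by
  choose c hc using fun i => (Fintype.mem_span_image_iff_exists_fun ℂ).mp (hf i)
  have hexpand : (fun w : Fin d → ℝ => ∏ i, f i (w i)) =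
      ∑ κ : (i : Fin d) → Set.Ioo (-(M i : ℤ)) (M i),
        (∏ i, c i (κ i)) • expFun (fun i => (κ i : ℤ)) := by
    ext w
    simp only [← hc, Finset.sum_apply, Pi.smul_apply, smul_eq_mul, prod_univ_sum,
      Fintype.piFinset_univ, ← prod_expI_eq_expFun, ← prod_mul_distrib]
  rw [hexpand]
  refine Submodule.sum_mem _ fun κ _ => Submodule.smul_mem _ _ (Submodule.subset_span ⟨_, ?_, rfl⟩)
  exact hQ _ fun i => abs_lt.mpr (κ i).2

lemma setIntegral_fejerK_sub {n : ℕ} (hn : 0 < n) (x : ℝ) :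
    ∫ t in Set.Icc 0 (2 * π), (fejerK n (x - t) : ℂ) = ((2 * π : ℝ) : ℂ) := by
  have hint : ∀ (a : ℂ) (k : ℤ),
      Integrable (fun t => a * expI k t) (volume.restrict (Set.Icc 0 (2 * π))) :=
    fun a k => ((continuous_expI k).integrableOn_Icc).const_mul a
  simp only [fejerK_sub_eq_sum]
  rw [integral_finsetSum _ fun j _ => integrable_finsetSum _ fun j' _ => hint _ _]
  simp only [integral_finsetSum _ fun j' _ => hint _ _, integral_const_mul, setIntegral_expI]
  have hdiag : ∀ j ∈ range n, ∑ j' ∈ range n, (n : ℂ)⁻¹ * expI ((j : ℤ) - j') x *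
      (if (j' : ℤ) - j = 0 then ((2 * π : ℝ) : ℂ) else 0) = (n : ℂ)⁻¹ * ((2 * π : ℝ) : ℂ) := by
    intro j hj
    rw [sum_eq_single j (fun j' _ hj' => by rw [if_neg (by omega), mul_zero])
      (fun hj' => absurd hj hj')]
    simp [expI_zero_left]
  rw [sum_congr rfl hdiag, sum_const, card_range, nsmul_eq_mul, ← mul_assoc,
    mul_inv_cancel₀ (by exact_mod_cast hn.ne'), one_mul]

lemma setIntegral_vpKMajorant_sub {j : ℕ} (hj : 0 < j) (x : ℝ) :
    ∫ t in Set.Icc 0 (2 * π), (vpKMajorant j (x - t) : ℂ) = 3 * ((2 * π : ℝ) : ℂ) := by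
  have hint : ∀ n, IntegrableOn (fun t => (fejerK n (x - t) : ℂ)) (Set.Icc 0 (2 * π)) := by
    intro n
    refine Continuous.integrableOn_Icc ?_
    unfold fejerK expI
    fun_prop
  simp only [vpKMajorant, Complex.ofReal_add, Complex.ofReal_mul, Complex.ofReal_ofNat]
  rw [integral_add ((hint _).const_mul 2) (hint _), integral_const_mul,
    setIntegral_fejerK_sub (by omega), setIntegral_fejerK_sub hj]
  push_cast
  ring

lemma setIntegral_cube_prod {d : ℕ} (f : Fin d → ℝ → ℂ) :
    ∫ w in cube d, ∏ i, f i (w i) = ∏ i, ∫ t in Set.Icc 0 (2 * π), f i t := by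
  rw [cube, ← Set.pi_univ_Icc, volume_pi, Measure.restrict_pi_pi]
  exact integral_fintype_prod_eq_prod f

lemma norm_vpKd_sub_le {d : ℕ} (j : Fin d → ℕ) (x w : Fin d → ℝ) :
    ‖vpKd j (x - w)‖ ≤ ∏ i, vpKMajorant (j i) (x i - w i) := by
  rw [vpKd, norm_prod]
  exact prod_le_prod (fun i _ => norm_nonneg _) fun i _ => norm_vpK_le _ _

lemma prod_vpKMajorant_sub_mem_trigSpace {d : ℕ} (j : Fin d → ℕ) (x : Fin d → ℝ)
    {Q : Finset (Fin d → ℤ)} (hQ : ∀ k : Fin d → ℤ, (∀ i, |k i| < 2 * j i) → k ∈ Q) :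
    (fun w => ((∏ i, vpKMajorant (j i) (x i - w i) : ℝ) : ℂ)) ∈ trigSpace Q := by
  simp only [Complex.ofReal_prod]
  exact prod_mem_trigSpace (fun i => vpKMajorant_sub_mem_trigPoly1 (j i) (x i))
    fun k hk => hQ k fun i => by exact_mod_cast hk i

lemma setIntegral_prod_vpKMajorant_sub {d : ℕ} {j : Fin d → ℕ} (hj : ∀ i, 0 < j i)
    (x : Fin d → ℝ) :
    ∫ w in cube d, ((∏ i, vpKMajorant (j i) (x i - w i) : ℝ) : ℂ) =
      (3 * ((2 * π : ℝ) : ℂ)) ^ d := by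
  simp only [Complex.ofReal_prod]
  rw [setIntegral_cube_prod (fun i t => (vpKMajorant (j i) (x i - t) : ℂ))]
  simp [setIntegral_vpKMajorant_sub (hj _)]

lemma mean_prod_vpKMajorant_sub {d m : ℕ} {Q : Finset (Fin d → ℤ)} {w : ℕ → Fin d → ℝ}
    (hex : ∀ f ∈ trigSpace Q, (m : ℂ)⁻¹ * ∑ ν ∈ Icc 1 m, f (w ν) =
      (((2 * π) ^ d : ℝ) : ℂ)⁻¹ * ∫ x in cube d, f x)
    {j : Fin d → ℕ} (hj : ∀ i, 0 < j i) (hQ : ∀ k : Fin d → ℤ, (∀ i, |k i| < 2 * j i) → k ∈ Q)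
    (x : Fin d → ℝ) :
    (m : ℝ)⁻¹ * ∑ ν ∈ Icc 1 m, ∏ i, vpKMajorant (j i) (x i - w ν i) = 3 ^ d := by
  have h := hex _ (prod_vpKMajorant_sub_mem_trigSpace j x hQ)
  rw [setIntegral_prod_vpKMajorant_sub hj] at h
  have hπ : (2 * π : ℂ) ≠ 0 := by exact_mod_cast two_pi_pos.ne'
  apply Complex.ofReal_injective
  push_cast at h ⊢
  rw [h, mul_pow (3 : ℂ), mul_left_comm, inv_mul_cancel₀ (pow_ne_zero d hπ), mul_one]

lemma unifNorm_le {d : ℕ} {f : (Fin d → ℝ) → ℂ} {C : ℝ} (hC : 0 ≤ C) (hf : ∀ x, ‖f x‖ ≤ C) :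
    unifNorm f ≤ C :=
  Real.iSup_le (fun x => hf x) hC

lemma sum_fin_add_one_eq_sum_Icc {M : Type*} [AddCommMonoid M] (m : ℕ) (f : ℕ → M) :
    ∑ ν : Fin m, f (ν + 1) = ∑ ν ∈ Icc 1 m, f ν := by
  rw [Fin.sum_univ_eq_sum_range (fun ν => f (ν + 1)), range_eq_Ico, sum_Ico_add' f,
    zero_add, Ico_add_one_right_eq_Icc]

lemma unifNorm_mean_vpKd_le {d m : ℕ} {Q : Finset (Fin d → ℤ)} {w : ℕ → Fin d → ℝ}
    (hex : ∀ f ∈ trigSpace Q, (m : ℂ)⁻¹ * ∑ ν ∈ Icc 1 m, f (w ν) =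
      (((2 * π) ^ d : ℝ) : ℂ)⁻¹ * ∫ x in cube d, f x)
    {j : Fin d → ℕ} (hj : ∀ i, 0 < j i) (hQ : ∀ k : Fin d → ℤ, (∀ i, |k i| < 2 * j i) → k ∈ Q)
    (a : Fin m → ℂ) :
    unifNorm (fun x => (m : ℂ)⁻¹ * ∑ ν : Fin m, a ν * (‖vpKd j (x - w ((ν : ℕ) + 1))‖ : ℂ)) ≤
      3 ^ d * ⨆ ν : Fin m, ‖a ν‖ := by
  set A := ⨆ ν : Fin m, ‖a ν‖
  have hA : ∀ ν, ‖a ν‖ ≤ A := le_ciSup (Set.finite_range _).bddAbove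
  have hA0 : 0 ≤ A := Real.iSup_nonneg fun ν => norm_nonneg _
  refine unifNorm_le (by positivity) fun x => ?_
  set G : ℕ → ℝ := fun ν => ∏ i, vpKMajorant (j i) (x i - w ν i)
  have hterm : ∀ ν : Fin m, ‖a ν * (‖vpKd j (x - w ((ν : ℕ) + 1))‖ : ℂ)‖ ≤ A * G (ν + 1) := by
    intro ν
    rw [norm_mul, Complex.norm_real, norm_norm]
    exact mul_le_mul (hA ν) (norm_vpKd_sub_le j x _) (norm_nonneg _) hA0
  calc ‖(m : ℂ)⁻¹ * ∑ ν : Fin m, a ν * (‖vpKd j (x - w ((ν : ℕ) + 1))‖ : ℂ)‖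
      ≤ (m : ℝ)⁻¹ * ∑ ν : Fin m, A * G (ν + 1) := by
        rw [norm_mul, norm_inv, Complex.norm_natCast]
        gcongr
        exact (norm_sum_le _ _).trans (sum_le_sum fun ν _ => hterm ν)
    _ = A * ((m : ℝ)⁻¹ * ∑ ν ∈ Icc 1 m, G ν) := by
        rw [sum_fin_add_one_eq_sum_Icc m (fun ν => A * G ν), ← mul_sum]
        ring
    _ = 3 ^ d * A := by
        rw [mean_prod_vpKMajorant_sub hex hj hQ x]
        ring

lemma mem_hyperCross_of_abs_lt {d N : ℕ} {M : Fin d → ℕ} (hMN : ∏ i, M i ≤ N)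
    {k : Fin d → ℤ} (hk : ∀ i, |k i| < M i) : k ∈ hyperCross d N := by
  have hM : ∀ i, 1 ≤ M i := fun i => by have := hk i; have := abs_nonneg (k i); omega
  have hMN' : ∀ i, M i ≤ N := fun i => (single_le_prod' (fun i _ => hM i) (mem_univ i)).trans hMN
  simp only [hyperCross, mem_filter, Fintype.mem_piFinset, mem_Icc]
  refine ⟨fun i => abs_le.mp ((hk i).le.trans (by exact_mod_cast hMN' i)), ?_⟩
  calc ∏ i, max |k i| 1 ≤ ∏ i, (M i : ℤ) :=
        prod_le_prod (fun i _ => by positivity) fun i _ => max_le (hk i).le (by exact_mod_cast hM i)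
    _ ≤ N := by exact_mod_cast hMN

theorem stmt15_general (d m N : ℕ) (h : Fin d → ℤ)
    (hex : ∀ f ∈ trigSpace (hyperCross d N),
      (m : ℂ)⁻¹ * ∑ ν ∈ Finset.Icc 1 m, f (korNode m h ν) =
        (((2 * Real.pi) ^ d : ℝ) : ℂ)⁻¹ * ∫ x in cube d, f x)
    (ℓ : ℕ) (hℓ : IsGreatest {k : ℕ | (2 : ℝ) ^ k ≤ ((3 : ℝ) ^ d)⁻¹ * N} ℓ)
    (s : Fin d → ℕ) (hs : (∑ j, s j) ≤ ℓ)
    (a : Fin m → ℂ) :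
    unifNorm (fun x => (m : ℂ)⁻¹ * ∑ ν : Fin m,
        a ν * (‖vpKd (fun i => 2 ^ s i) (x - korNode m h ((ν : ℕ) + 1))‖ : ℂ)) ≤
      3 ^ d * ⨆ ν : Fin m, ‖a ν‖ := by
  have hN : 2 ^ (ℓ + d) ≤ N := by
    have h3 : (2 : ℝ) ^ ℓ * 3 ^ d ≤ N := (le_inv_mul_iff₀' (by positivity)).mp hℓ.1
    have h2 : (2 : ℝ) ^ (ℓ + d) ≤ N :=
      (pow_add (2 : ℝ) ℓ d).trans_le (le_trans (by gcongr; norm_num) h3)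
    exact_mod_cast h2
  refine unifNorm_mean_vpKd_le hex (fun i => by positivity) (fun k hk => ?_) a
  refine mem_hyperCross_of_abs_lt (M := fun i => 2 * 2 ^ s i) ?_ fun i => by push_cast; exact hk i
  calc ∏ i, 2 * 2 ^ s i = 2 ^ (∑ i, s i + d) := by
        rw [prod_mul_distrib, prod_const, prod_pow_eq_pow_sum, card_univ, Fintype.card_fin,
          pow_add, mul_comm]
    _ ≤ 2 ^ (ℓ + d) := by gcongr; norm_num
    _ ≤ N := hN

/-- property (II) of the Korobov point set, a uniform bound for sums of
absolute values of shifted de la Vallée Poussin kernels (Theorem CT1 (II)). -/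
theorem stmt15 (d m N : ℕ) (hd : 0 < d) (hm : 0 < m) (h : Fin d → ℤ)
    (hex : ∀ f ∈ trigSpace (hyperCross d N),
      (m : ℂ)⁻¹ * ∑ ν ∈ Finset.Icc 1 m, f (korNode m h ν) =
        (((2 * Real.pi) ^ d : ℝ) : ℂ)⁻¹ * ∫ x in cube d, f x)
    (ℓ : ℕ) (hℓ : IsGreatest {k : ℕ | (2 : ℝ) ^ k ≤ ((3 : ℝ) ^ d)⁻¹ * N} ℓ)
    (s : Fin d → ℕ) (hs : (∑ j, s j) ≤ ℓ)
    (a : Fin m → ℂ) :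
    unifNorm (fun x => (m : ℂ)⁻¹ * ∑ ν : Fin m,
        a ν * (‖vpKd (fun i => 2 ^ s i) (x - korNode m h ((ν : ℕ) + 1))‖ : ℂ)) ≤
      3 ^ d * ⨆ ν : Fin m, ‖a ν‖ :=
  stmt15_general d m N h hex ℓ hℓ s hs a
end
end
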